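/- Let α, β > 0 and G ∈ ℝ with 2αβ < G < α² + αβ. Then v* := (α+β)/2 − √( ((α+β)/2)² + G − αβ ) satisfies −α < v* < 0, and for any v ∈ (−α, 0] the equation −v = ( G/(α−v) − β )₊ holds if and only if v = v*. Here (y)₊ denotes the positive part max(y,0). -/

import Mathlib

/-!
Writing `m = (α + β) / 2`, the equation `-v = G / (α - v) - β` is the quadratic
`(β - v) (α - v) = G`, i.e. `(m - v)² = m² + G - αβ`, whose root below `m` is `v*`.
For `v ≤ 0` the positive part is harmless: at `v = 0` it would force `G ≤ αβ`.
The bounds `-α < v* < 0` amount to `m² < m² + G - αβ < (m + α)²`.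
-/

open Real

noncomputable def freeBoundaryVelocity (α β G : ℝ) : ℝ :=
  (α + β) / 2 - √(((α + β) / 2) ^ 2 + G - α * β)

lemma sub_mul_sub_eq_iff_sq_eq (α β G v : ℝ) :
    (β - v) * (α - v) = G ↔ ((α + β) / 2 - v) ^ 2 = ((α + β) / 2) ^ 2 + G - α * β := by
  constructor <;> intro h <;> linear_combination h

lemma eq_freeBoundaryVelocity_iff {α β G v : ℝ} (hv : v < (α + β) / 2) :
    v = freeBoundaryVelocity α β G ↔ (β - v) * (α - v) = G := by
  rw [sub_mul_sub_eq_iff_sq_eq, freeBoundaryVelocity, eq_sub_iff_add_eq, ← eq_sub_iff_add_eq',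
    sqrt_eq_iff_mul_self_eq_of_pos (sub_pos.2 hv), sq ((α + β) / 2 - v)]

lemma freeBoundaryVelocity_neg {α β G : ℝ} (hαβ : 0 ≤ α + β) (hG : α * β < G) :
    freeBoundaryVelocity α β G < 0 := by
  rw [freeBoundaryVelocity, sub_neg, lt_sqrt (by positivity)]
  linarith

lemma neg_lt_freeBoundaryVelocity {α β G : ℝ} (hα : 0 < α) (hβ : 0 ≤ β)
    (hG : G < 2 * α * (α + β)) : -α < freeBoundaryVelocity α β G := by
  rw [freeBoundaryVelocity, neg_lt_sub_iff_lt_add, sqrt_lt' (by positivity)]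
  nlinarith

lemma eq_max_zero_iff_of_pos_or_pos {x y : ℝ} (h : 0 < x ∨ 0 < y) :
    x = max y 0 ↔ x = y := by
  rcases le_total y 0 with hy | hy
  · rw [max_eq_right hy]
    constructor <;> intro hxy <;> rcases h with h | h <;> linarith
  · rw [max_eq_left hy]

lemma neg_eq_max_div_sub_zero_iff {α β G v : ℝ} (hα : 0 < α) (hG : α * β < G) (hv : v ≤ 0) :
    -v = max (G / (α - v) - β) 0 ↔ (β - v) * (α - v) = G := by
  have hαv : 0 < α - v := by linarith
  have hpos : 0 < -v ∨ 0 < G / (α - v) - β := by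
    rcases hv.lt_or_eq with hv | rfl
    · exact .inl (neg_pos.2 hv)
    · right
      rwa [sub_zero, sub_pos, lt_div_iff₀ hα, mul_comm]
  rw [eq_max_zero_iff_of_pos_or_pos hpos, eq_sub_iff_add_eq,
    eq_div_iff hαv.ne', neg_add_eq_sub, eq_comm]

theorem free_boundary_velocity_characterization (α β G : ℝ)
    (hα : 0 < α) (hβ : 0 < β) (h1 : 2 * α * β < G) (h2 : G < α ^ 2 + α * β) :
    (-α < (α + β) / 2 - Real.sqrt (((α + β) / 2) ^ 2 + G - α * β) ∧
      (α + β) / 2 - Real.sqrt (((α + β) / 2) ^ 2 + G - α * β) < 0) ∧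
    ∀ v ∈ Set.Ioc (-α) (0 : ℝ),
      (-v = max (G / (α - v) - β) 0 ↔
        v = (α + β) / 2 - Real.sqrt (((α + β) / 2) ^ 2 + G - α * β)) := by
  have hαβ : 0 < α * β := mul_pos hα hβ
  have hG : α * β < G := by linarith
  refine ⟨⟨neg_lt_freeBoundaryVelocity hα hβ.le (by nlinarith),
    freeBoundaryVelocity_neg (by linarith) hG⟩, ?_⟩
  rintro v ⟨-, hv⟩
  rw [neg_eq_max_div_sub_zero_iff hα hG hv, ← eq_freeBoundaryVelocity_iff (by linarith)]
  rfl
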